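/- For each cyclic permutation (i,j,k) of (1,2,3) and each sign ε ∈ {+1,−1}: J_i(I_{jk}^ε) = 0, J_j(I_{jk}^ε) = w^j (I_{jk}^ε − 1/2), and J_k(I_{jk}^ε) = w^k (I_{jk}^ε − 1/2). -/

import Mathlib

open scoped TensorProduct

noncomputable section

/-- The standard positive-definite quadratic form on `ℝ³`. -/
abbrev Q3 : QuadraticForm ℝ (Fin 3 → ℝ) :=
  QuadraticMap.weightedSumSquares ℝ (fun _ : Fin 3 => (1 : ℝ))

/-- The Clifford algebra of 3-dimensional Euclidean space. -/
abbrev Cl3 : Type := CliffordAlgebra Q3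

/-- The tensor product of two copies of `Cl3`, as ℝ-algebras. -/
abbrev A3 : Type := Cl3 ⊗[ℝ] Cl3

/-- The generators `e₁, e₂, e₃` (indexed by `Fin 3`). -/
def e (l : Fin 3) : Cl3 := CliffordAlgebra.ι Q3 (Pi.single l 1)

/-- `X_l := e_l ⊗ e_l`. -/
def X (l : Fin 3) : A3 := e l ⊗ₜ[ℝ] e l

/-- `w^i := (e_j e_k) ⊗ 1` for `(i,j,k)` a cyclic permutation of the indices. -/
def w (i : Fin 3) : A3 := (e (i + 1) * e (i + 2)) ⊗ₜ[ℝ] (1 : Cl3)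

/-- The (ℝ-linear) operators `J_l(U) := (1/2)(w^l U − U w^l)`. -/
def J (l : Fin 3) (U : A3) : A3 := (1/2 : ℝ) • (w l * U - U * w l)

/-- Kähler's total angular momentum operator `K+1`. -/
def K1 (U : A3) : A3 := J 0 U * w 0 + J 1 U * w 1 + J 2 U * w 2

/-- The idempotents `I_{ij}^ε := (1/2)(1 + ε X_i X_j)`. -/
def Iem (i j : Fin 3) (ε : ℝ) : A3 := (1/2 : ℝ) • ((1 : A3) + ε • (X i * X j))

/-- The idempotents `P_l^δ := (1/2)(1 + δ X_l)`. -/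
def P (l : Fin 3) (δ : ℝ) : A3 := (1/2 : ℝ) • ((1 : A3) + δ • X l)

/-!
Write `Y := X_j X_k = (e_j e_k) ⊗ (e_j e_k)`, so that `I_{jk}^ε = 1/2 + (ε/2) Y` and
`J_l(U) = (1/2)[w^l, U]`. The first tensor factor of `w^i` is `e_j e_k` itself, so `w^i` commutes
with `Y`. The first factors of `w^j = (e_k e_i) ⊗ 1` and `w^k = (e_i e_j) ⊗ 1` are bivectors sharing
exactly one index with `e_j e_k`, hence anticommute with it; then `[w, Y] = 2 w Y`, which gives
`J_l(I_{jk}^ε) = (ε/2) w^l Y = w^l (I_{jk}^ε - 1/2)`.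
-/

open Algebra.TensorProduct

theorem mul_mul_anticomm_of_mul_self_eq_one {R : Type*} [Ring R] {a b c : R} (hb : b * b = 1)
    (hab : a * b = -(b * a)) (hbc : b * c = -(c * b)) (hac : a * c = -(c * a)) :
    (b * c) * (a * b) = -((a * b) * (b * c)) :=
  calc (b * c) * (a * b) = b * (c * (a * b)) := mul_assoc _ _ _
    _ = b * (b * (c * a)) := by
      rw [hab, mul_neg, ← mul_assoc, ← neg_mul, ← hbc, mul_assoc]
    _ = -(a * c) := by rw [← mul_assoc, hb, one_mul, hac, neg_neg]
    _ = -((a * b) * (b * c)) := by rw [mul_assoc, ← mul_assoc b, hb, one_mul]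

section TensorProduct

variable {R A B : Type*} [CommRing R] [Ring A] [Algebra R A] [Ring B] [Algebra R B]

theorem Commute.tmul_one_left {a b : A} (h : Commute a b) (c : B) :
    Commute (a ⊗ₜ[R] (1 : B)) (b ⊗ₜ c) := by
  simp only [Commute, SemiconjBy, tmul_mul_tmul, one_mul, mul_one, h.eq]

theorem tmul_one_mul_eq_neg_of_mul_eq_neg {a b : A} (h : a * b = -(b * a)) (c : B) :
    (a ⊗ₜ[R] (1 : B)) * (b ⊗ₜ c) = -((b ⊗ₜ c) * (a ⊗ₜ[R] (1 : B))) := by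
  rw [tmul_mul_tmul, tmul_mul_tmul, one_mul, mul_one, h, TensorProduct.neg_tmul]

end TensorProduct

theorem e_mul_self (l : Fin 3) : e l * e l = 1 := by
  rw [e, CliffordAlgebra.ι_sq_scalar]
  simp [QuadraticMap.weightedSumSquares_apply, Pi.single_apply]

theorem e_mul_e_of_ne {l m : Fin 3} (h : l ≠ m) : e l * e m = -(e m * e l) := by
  refine CliffordAlgebra.ι_mul_ι_comm_of_isOrtho ?_
  rw [QuadraticMap.isOrtho_def]
  fin_cases l <;> fin_cases m <;>
    simp_all [QuadraticMap.weightedSumSquares_apply, Fin.sum_univ_three]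

theorem e_bivector_anticomm {l m n : Fin 3} (hlm : l ≠ m) (hmn : m ≠ n) (hln : l ≠ n) :
    (e m * e n) * (e l * e m) = -((e l * e m) * (e m * e n)) :=
  mul_mul_anticomm_of_mul_self_eq_one (e_mul_self m) (e_mul_e_of_ne hlm) (e_mul_e_of_ne hmn)
    (e_mul_e_of_ne hln)

theorem X_mul_X (j k : Fin 3) : X j * X k = (e j * e k) ⊗ₜ (e j * e k) := tmul_mul_tmul _ _ _ _

theorem w_add_one (i : Fin 3) : w (i + 1) = (e (i + 2) * e i) ⊗ₜ 1 := by
  fin_cases i <;> rfl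

theorem w_add_two (i : Fin 3) : w (i + 2) = (e i * e (i + 1)) ⊗ₜ 1 := by
  fin_cases i <;> rfl

theorem J_Iem_eq_zero_of_commute {l j k : Fin 3} (ε : ℝ) (h : Commute (w l) (X j * X k)) :
    J l (Iem j k ε) = 0 := by
  have hI : Commute (w l) (Iem j k ε) :=
    ((Commute.one_right _).add_right (h.smul_right ε)).smul_right _
  rw [J, hI.eq, sub_self, smul_zero]

theorem J_Iem_eq_of_anticomm {l j k : Fin 3} (ε : ℝ)
    (h : w l * (X j * X k) = -((X j * X k) * w l)) :
    J l (Iem j k ε) = w l * (Iem j k ε - (1/2 : ℝ) • (1 : A3)) := by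
  simp only [J, Iem, smul_add, mul_add, add_mul, mul_smul_comm, smul_mul_assoc, h, mul_one,
    one_mul, add_sub_cancel_left]
  module

theorem stmt2_general (i j k : Fin 3) (hj : j = i + 1) (hk : k = i + 2)
    (ε : ℝ) :
    J i (Iem j k ε) = 0 ∧
    J j (Iem j k ε) = w j * (Iem j k ε - (1/2 : ℝ) • (1 : A3)) ∧
    J k (Iem j k ε) = w k * (Iem j k ε - (1/2 : ℝ) • (1 : A3)) := by
  subst hj hk
  have h01 : i ≠ i + 1 := by revert i; decide
  have h12 : i + 1 ≠ i + 2 := by revert i; decide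
  have h02 : i ≠ i + 2 := by revert i; decide
  refine ⟨J_Iem_eq_zero_of_commute ε ?_, J_Iem_eq_of_anticomm ε ?_, J_Iem_eq_of_anticomm ε ?_⟩
  · rw [X_mul_X]
    exact (Commute.refl _).tmul_one_left _
  · rw [X_mul_X, w_add_one]
    exact tmul_one_mul_eq_neg_of_mul_eq_neg (e_bivector_anticomm h12 h02.symm h01.symm) _
  · rw [X_mul_X, w_add_two]
    exact tmul_one_mul_eq_neg_of_mul_eq_neg
      (neg_eq_iff_eq_neg.mp (e_bivector_anticomm h01 h12 h02).symm) _

/-- For each cyclic permutation `(i,j,k)` and each sign `ε`: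
`J_i(I_{jk}^ε) = 0`, `J_j(I_{jk}^ε) = w^j (I_{jk}^ε − 1/2)`, and
`J_k(I_{jk}^ε) = w^k (I_{jk}^ε − 1/2)`. -/
theorem stmt2 (i j k : Fin 3) (hj : j = i + 1) (hk : k = i + 2)
    (ε : ℝ) (hε : ε = 1 ∨ ε = -1) :
    J i (Iem j k ε) = 0 ∧
    J j (Iem j k ε) = w j * (Iem j k ε - (1/2 : ℝ) • (1 : A3)) ∧
    J k (Iem j k ε) = w k * (Iem j k ε - (1/2 : ℝ) • (1 : A3)) :=
  stmt2_general i j k hj hk ε
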